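/- Comparison theorem for profiles under weak moments: if φ is a symmetric probability measure on a finitely generated group G with W(ρ,φ) ≤ K, then for every v > 0, p ∈ [1,∞), and every s > 0, Λ_{p,φ}(v) ≤ C(p,ρ)·K·(1/ρ(s) + |S*|·s^p/M_{p,ρ}(s) · Λ_{p,u}(v)), where M_{p,ρ}(t) = t^p/∫₀^t s^{p−1}/ρ(s) ds and u is the uniform measure on the generating set S*. -/

import Mathlib

open scoped BigOperators

/-- A symmetric probability measure on a group. -/
def IsSymProb {G : Type*} [Group G] (φ : G → ℝ) : Prop :=
  (∀ x, 0 ≤ φ x) ∧ (∑' x, φ x) = 1 ∧ ∀ x, φ x⁻¹ = φ x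

/-- Word length with respect to a finite symmetric generating set `S`. -/
noncomputable def wordLength {G : Type*} [Group G] (S : Finset G) (g : G) : ℕ :=
  sInf {n : ℕ | ∃ l : List G, (∀ x ∈ l, x ∈ S) ∧ l.length = n ∧ l.prod = g}

/-- The uniform probability measure on the generating set `S`. -/
noncomputable def unifS {G : Type*} [Group G] [DecidableEq G] (S : Finset G) : G → ℝ :=
  fun y => if y ∈ S then ((S.card : ℝ))⁻¹ else 0

/-- The `L^p` isoperimetric profile. -/
noncomputable def lambdaP {G : Type*} [Group G] (p : ℝ) (φ : G → ℝ) (v : ℝ) : ℝ :=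
  sInf {E : ℝ | ∃ f : G → ℝ, (Function.support f).Finite ∧
    ((Function.support f).ncard : ℝ) ≤ v ∧ (∑' x, |f x| ^ p) = 1 ∧
    E = (1 / 2) * ∑' x : G, ∑' y : G, |f (x * y) - f x| ^ p * φ y}

/-!
For `‖f‖_p = 1` let `g(y) = ‖f(· y) - f‖_p^p`, so that `E_{p,μ}(f) = ½ Σ_y g(y) μ(y)` for every
measure `μ`; for the uniform measure this reads `Σ_{z ∈ S} g(z) = 2|S| E_{p,u}(f)`.
By Minkowski, `g^{1/p}` is subadditive and bounded by `2`, so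
`g(y) ≤ min (2^p, |y|^p Σ_{z ∈ S} g(z))`.
The weak moment bound gives `φ(|y| > t) ≤ K / ρ(t)`; splitting `G` into `|y| > s` and the dyadic
shells `s / 2^(k+1) < |y| ≤ s / 2^k` then bounds `Σ_y g(y) φ(y)` by `2^p K / ρ(s)` plus
`K Σ_{z ∈ S} g(z)` times `Σ_k (s / 2^k)^p / ρ(s / 2^(k+1)) ≤ 4^p ∫_0^s u^(p-1) / ρ(u) du`.
Taking infima over `f` gives the comparison with `C = 4^p`.
-/

theorem Real.Lp_abs_add_le_tsum {ι : Type*} {p : ℝ} (hp : 1 ≤ p) {a b : ι → ℝ}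
    (ha : Summable fun i => |a i| ^ p) (hb : Summable fun i => |b i| ^ p) :
    (Summable fun i => |a i + b i| ^ p) ∧
      (∑' i, |a i + b i| ^ p) ^ p⁻¹ ≤ (∑' i, |a i| ^ p) ^ p⁻¹ + (∑' i, |b i| ^ p) ^ p⁻¹ := by
  obtain ⟨hsum, hle⟩ := Real.Lp_add_le_tsum_of_nonneg hp (fun i => abs_nonneg (a i))
    (fun i => abs_nonneg (b i)) ha hb
  have hmono : ∀ i, |a i + b i| ^ p ≤ (|a i| + |b i|) ^ p := fun i =>
    Real.rpow_le_rpow (abs_nonneg _) (abs_add_le _ _) (by linarith)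
  have hsum' : Summable fun i => |a i + b i| ^ p :=
    hsum.of_nonneg_of_le (fun i => by positivity) hmono
  refine ⟨hsum', le_trans ?_ (by simpa only [one_div] using hle)⟩
  exact Real.rpow_le_rpow (tsum_nonneg fun i => by positivity) (hsum'.tsum_le_tsum hmono hsum)
    (by positivity)

lemma summable_of_tsum_eq_one {α : Type*} {g : α → ℝ} (h : ∑' x, g x = 1) : Summable g := by
  by_contra hg
  rw [tsum_eq_zero_of_not_summable hg] at h
  exact zero_ne_one h

lemma exists_dyadic_Ioc_mem {s r : ℝ} (hrs : r ≤ s) :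
    ∀ J : ℕ, s / 2 ^ J < r → ∃ k < J, s / 2 ^ (k + 1) < r ∧ r ≤ s / 2 ^ k
  | 0, hJ => by simp only [pow_zero, div_one] at hJ; linarith
  | J + 1, hJ => by
    by_cases h : s / 2 ^ J < r
    · obtain ⟨k, hkJ, hk⟩ := exists_dyadic_Ioc_mem hrs J h
      exact ⟨k, by omega, hk⟩
    · exact ⟨J, by omega, hJ, not_lt.mp h⟩

lemma tsum_indicator_lt_le_div {α : Type*} {μ : α → ℝ} (hμ : ∀ x, 0 ≤ μ x)
    (hμs : Summable μ) {L : α → ℝ} (hL : ∀ x, 0 ≤ L x) {ρ : ℝ → ℝ}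
    (hρmono : MonotoneOn ρ (Set.Ici 0)) {K : ℝ}
    (hmom : ∀ t > (0 : ℝ), t * ∑' x, {x | t < ρ (L x)}.indicator μ x ≤ K)
    {a : ℝ} (ha : 0 ≤ a) (hρa : 0 < ρ a) :
    ∑' x, {x | a < L x}.indicator μ x ≤ K / ρ a := by
  set m := ∑' x, {x | a < L x}.indicator μ x
  have hle : ∀ t ∈ Set.Ioo 0 (ρ a), t * m ≤ K := by
    intro t ht
    have hsub : {x | a < L x} ⊆ {x | t < ρ (L x)} := fun x hx =>
      ht.2.trans_le (hρmono ha (hL x) (le_of_lt hx))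
    refine le_trans (mul_le_mul_of_nonneg_left ?_ ht.1.le) (hmom t ht.1)
    exact (hμs.indicator _).tsum_le_tsum (Set.indicator_le_indicator_of_subset hsub hμ)
      (hμs.indicator _)
  rw [le_div_iff₀ hρa, mul_comm]
  have hlim :
      Filter.Tendsto (fun t => t * m) (nhdsWithin (ρ a) (Set.Iio (ρ a))) (nhds (ρ a * m)) :=
    ((continuous_mul_const m).tendsto (ρ a)).mono_left nhdsWithin_le_nhds
  exact le_of_tendsto hlim (Filter.eventually_of_mem (Ioo_mem_nhdsLT hρa) hle)

section Integral

open intervalIntegral MeasureTheory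

variable {p : ℝ} {ρ : ℝ → ℝ} (hp : 1 ≤ p) (hρmono : MonotoneOn ρ (Set.Ici 0))
  (hρpos : ∀ t ≥ 0, 0 < ρ t)
include hp hρmono hρpos

lemma intervalIntegrable_rpow_div {a b : ℝ} (ha : 0 ≤ a) (hb : 0 ≤ b) :
    IntervalIntegrable (fun u => u ^ (p - 1) / ρ u) volume a b := by
  have hsub : Set.uIcc a b ⊆ Set.Ici 0 := fun u hu => (le_min ha hb).trans hu.1
  have hinv : IntervalIntegrable (fun u => (ρ u)⁻¹) volume a b :=
    AntitoneOn.intervalIntegrable fun x hx y hy hxy =>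
      inv_anti₀ (hρpos x (hsub hx)) (hρmono (hsub hx) (hsub hy) hxy)
  simpa only [div_eq_mul_inv] using
    hinv.continuousOn_mul (Real.continuous_rpow_const (by linarith)).continuousOn

lemma rpow_div_le_two_rpow_mul_integral {a : ℝ} (ha : 0 < a) :
    a ^ p / ρ a ≤ 2 ^ p * ∫ u in a / 2..a, u ^ (p - 1) / ρ u := by
  have hbelow : ∀ u ∈ Set.Icc (a / 2) a, (a / 2) ^ (p - 1) / ρ a ≤ u ^ (p - 1) / ρ u :=
    fun u hu => by
      have hu0 : 0 < u := (half_pos ha).trans_le hu.1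
      exact div_le_div₀ (by positivity) (Real.rpow_le_rpow (by positivity) hu.1 (by linarith))
        (hρpos u hu0.le) (hρmono hu0.le ha.le hu.2)
  have hint := integral_mono_on (by linarith) intervalIntegrable_const
    (intervalIntegrable_rpow_div hp hρmono hρpos (by positivity) ha.le) hbelow
  rw [intervalIntegral.integral_const, smul_eq_mul] at hint
  have hsplit : a ^ p = 2 ^ p * ((a - a / 2) * (a / 2) ^ (p - 1)) := by
    rw [show a - a / 2 = a / 2 by ring, ← Real.rpow_one_add' (by positivity) (by linarith),
      add_sub_cancel, ← Real.mul_rpow (by norm_num) (by positivity)]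
    ring_nf
  rw [hsplit, mul_div_assoc, mul_div_assoc]
  gcongr

lemma sum_dyadic_le_integral {s : ℝ} (hs : 0 < s) (J : ℕ) :
    ∑ k ∈ Finset.range J, (s / 2 ^ k) ^ p / ρ (s / 2 ^ (k + 1)) ≤
      4 ^ p * ∫ u in (0 : ℝ)..s, u ^ (p - 1) / ρ u := by
  set a : ℕ → ℝ := fun k => s / 2 ^ (k + 1)
  have ha : ∀ k, 0 < a k := fun k => by positivity
  have hterm : ∀ k, (s / 2 ^ k) ^ p / ρ (s / 2 ^ (k + 1)) ≤
      4 ^ p * ∫ u in a (k + 1)..a k, u ^ (p - 1) / ρ u := by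
    intro k
    have h := rpow_div_le_two_rpow_mul_integral hp hρmono hρpos (ha k)
    have hhalf : a k / 2 = a (k + 1) := by
      show s / 2 ^ (k + 1) / 2 = s / 2 ^ (k + 1 + 1)
      rw [pow_succ _ (k + 1)]; ring
    have hdouble : (s / 2 ^ k) ^ p = 2 ^ p * a k ^ p := by
      rw [← Real.mul_rpow (by norm_num) (ha k).le]
      show (s / 2 ^ k) ^ p = (2 * (s / 2 ^ (k + 1))) ^ p
      rw [pow_succ]; field_simp
    rw [hhalf] at h
    rw [hdouble, mul_div_assoc, show (4 : ℝ) ^ p = 2 ^ p * 2 ^ p by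
      rw [← Real.mul_rpow (by norm_num) (by norm_num)]; norm_num, mul_assoc]
    gcongr
  have htelescope : ∑ k ∈ Finset.range J, ∫ u in a (k + 1)..a k, u ^ (p - 1) / ρ u =
      ∫ u in a J..a 0, u ^ (p - 1) / ρ u := by
    rw [Finset.sum_congr rfl fun k _ => integral_symm (a k) (a (k + 1)), Finset.sum_neg_distrib,
      sum_integral_adjacent_intervals fun k _ =>
        intervalIntegrable_rpow_div hp hρmono hρpos (ha k).le (ha (k + 1)).le,
      integral_symm, neg_neg]
  have haJ : a J ≤ a 0 := div_le_div_of_nonneg_left hs.le (by positivity)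
    (pow_le_pow_right₀ (by norm_num) (by omega))
  have ha0 : a 0 ≤ s := by
    show s / 2 ^ (0 + 1) ≤ s
    linarith
  calc ∑ k ∈ Finset.range J, (s / 2 ^ k) ^ p / ρ (s / 2 ^ (k + 1))
      ≤ ∑ k ∈ Finset.range J, 4 ^ p * ∫ u in a (k + 1)..a k, u ^ (p - 1) / ρ u :=
        Finset.sum_le_sum fun k _ => hterm k
    _ = 4 ^ p * ∫ u in a J..a 0, u ^ (p - 1) / ρ u := by rw [← Finset.mul_sum, htelescope]
    _ ≤ 4 ^ p * ∫ u in (0 : ℝ)..s, u ^ (p - 1) / ρ u := by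
        gcongr
        refine integral_mono_interval (ha J).le haJ ha0 ?_
          (intervalIntegrable_rpow_div hp hρmono hρpos le_rfl hs.le)
        refine ae_restrict_of_forall_mem measurableSet_Ioc fun u hu => ?_
        exact div_nonneg (Real.rpow_nonneg hu.1.le _) (hρpos u hu.1.le).le

end Integral

section ShiftEnergy

variable {G : Type*} [Group G] {p : ℝ} {f : G → ℝ}

noncomputable def shiftEnergy (p : ℝ) (f : G → ℝ) (y : G) : ℝ :=
  ∑' x, |f (x * y) - f x| ^ p

lemma shiftEnergy_nonneg (y : G) : 0 ≤ shiftEnergy p f y :=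
  tsum_nonneg fun _ => Real.rpow_nonneg (abs_nonneg _) _

lemma shiftEnergy_one (hp : 0 < p) : shiftEnergy p f 1 = 0 := by
  simp [shiftEnergy, Real.zero_rpow hp.ne']

variable (hp : 1 ≤ p) (hf : Summable fun x => |f x| ^ p)
include hp hf

lemma Lp_sub_mulRight_le_tsum (y : G) :
    (Summable fun x => |f (x * y) - f x| ^ p) ∧
      shiftEnergy p f y ^ p⁻¹ ≤ 2 * (∑' x, |f x| ^ p) ^ p⁻¹ := by
  have hneg : Summable fun x => |-f x| ^ p := by simpa only [abs_neg] using hf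
  obtain ⟨hsum, hle⟩ :=
    Real.Lp_abs_add_le_tsum hp ((Equiv.mulRight y).summable_iff.mpr hf) hneg
  simp only [← sub_eq_add_neg, abs_neg] at hsum hle
  refine ⟨hsum, hle.trans_eq ?_⟩
  rw [(Equiv.mulRight y).tsum_eq (fun x => |f x| ^ p)]
  ring

lemma summable_shiftEnergy (y : G) : Summable fun x => |f (x * y) - f x| ^ p :=
  (Lp_sub_mulRight_le_tsum hp hf y).1

lemma shiftEnergy_le (y : G) : shiftEnergy p f y ≤ 2 ^ p * ∑' x, |f x| ^ p := by
  have hN : 0 ≤ ∑' x, |f x| ^ p := tsum_nonneg fun x => by positivity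
  have h := (Real.rpow_inv_le_iff_of_pos (shiftEnergy_nonneg y) (by positivity)
    (by linarith)).mp (Lp_sub_mulRight_le_tsum hp hf y).2
  rwa [Real.mul_rpow (by norm_num) (by positivity), Real.rpow_inv_rpow hN (by linarith)] at h

lemma summable_shiftEnergy_mul {μ : G → ℝ} (hμ : ∀ y, 0 ≤ μ y) (hμs : Summable μ) :
    Summable fun y => shiftEnergy p f y * μ y :=
  (hμs.mul_left (2 ^ p * ∑' x, |f x| ^ p)).of_nonneg_of_le
    (fun y => mul_nonneg (shiftEnergy_nonneg y) (hμ y))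
    fun y => mul_le_mul_of_nonneg_right (shiftEnergy_le hp hf y) (hμ y)

lemma shiftEnergy_mul_rpow_inv_le (y z : G) :
    shiftEnergy p f (y * z) ^ p⁻¹ ≤ shiftEnergy p f y ^ p⁻¹ + shiftEnergy p f z ^ p⁻¹ := by
  have hz : Summable fun x => |f (x * y * z) - f (x * y)| ^ p :=
    (Equiv.mulRight y).summable_iff.mpr (summable_shiftEnergy hp hf z)
  have htr : ∑' x, |f (x * y * z) - f (x * y)| ^ p = shiftEnergy p f z :=
    (Equiv.mulRight y).tsum_eq fun x => |f (x * z) - f x| ^ p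
  have h := (Real.Lp_abs_add_le_tsum hp hz (summable_shiftEnergy hp hf y)).2
  rw [htr] at h
  simp only [sub_add_sub_cancel, mul_assoc] at h
  exact h.trans_eq (add_comm _ _)

lemma shiftEnergy_list_prod_rpow_inv_le {c : ℝ} (l : List G)
    (hl : ∀ z ∈ l, shiftEnergy p f z ^ p⁻¹ ≤ c) :
    shiftEnergy p f l.prod ^ p⁻¹ ≤ l.length * c := by
  induction l with
  | nil =>
    simp [shiftEnergy_one (p := p) (f := f) (by linarith),
      Real.zero_rpow (by positivity : p⁻¹ ≠ 0)]
  | cons a l ih =>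
    rw [List.prod_cons, List.length_cons]
    have ha := hl a List.mem_cons_self
    have ih' := ih fun z hz => hl z (List.mem_cons_of_mem a hz)
    push_cast
    linarith [shiftEnergy_mul_rpow_inv_le hp hf a l.prod]

end ShiftEnergy

section WordLength

variable {G : Type*} [Group G] (S : Finset G)

lemma exists_list_length_eq_wordLength (hsymm : ∀ s ∈ S, s⁻¹ ∈ S)
    (hgen : Subgroup.closure (S : Set G) = ⊤) (y : G) :
    ∃ l : List G, (∀ x ∈ l, x ∈ S) ∧ l.length = wordLength S y ∧ l.prod = y := by
  have hS : (S : Set G) ∪ (S : Set G)⁻¹ = S :=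
    Set.union_eq_left.mpr fun x hx => by simpa using hsymm _ hx
  have hy : y ∈ Submonoid.closure (S : Set G) := by
    rw [← hS, ← Subgroup.closure_toSubmonoid, hgen]
    trivial
  obtain ⟨l, hl, hprod⟩ := Submonoid.exists_list_of_mem_closure hy
  exact Nat.sInf_mem (s := {n | ∃ l : List G, (∀ x ∈ l, x ∈ S) ∧ l.length = n ∧ l.prod = y})
    ⟨l.length, l, hl, rfl, hprod⟩

variable {p : ℝ} {f : G → ℝ}

lemma shiftEnergy_le_wordLength_rpow_mul (hp : 1 ≤ p) (hf : Summable fun x => |f x| ^ p)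
    (hsymm : ∀ s ∈ S, s⁻¹ ∈ S) (hgen : Subgroup.closure (S : Set G) = ⊤) (y : G) :
    shiftEnergy p f y ≤ (wordLength S y : ℝ) ^ p * ∑ z ∈ S, shiftEnergy p f z := by
  set T := ∑ z ∈ S, shiftEnergy p f z
  have hT : 0 ≤ T := Finset.sum_nonneg fun z _ => shiftEnergy_nonneg z
  obtain ⟨l, hlS, hlen, rfl⟩ := exists_list_length_eq_wordLength S hsymm hgen y
  have hl : ∀ z ∈ l, shiftEnergy p f z ^ p⁻¹ ≤ T ^ p⁻¹ := fun z hz =>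
    Real.rpow_le_rpow (shiftEnergy_nonneg z)
      (Finset.single_le_sum (fun z _ => shiftEnergy_nonneg z) (hlS z hz)) (by positivity)
  have h := (Real.rpow_inv_le_iff_of_pos (shiftEnergy_nonneg _) (by positivity)
    (by linarith)).mp (shiftEnergy_list_prod_rpow_inv_le hp hf l hl)
  rwa [Real.mul_rpow (by positivity) (by positivity), Real.rpow_inv_rpow hT (by linarith),
    hlen] at h

end WordLength

section WeakMoment

variable {G : Type*} [Group G] (S : Finset G) {p : ℝ} {f φ : G → ℝ}

lemma shiftEnergy_mul_le_dyadic_sum (hp : 1 ≤ p) (hf : Summable fun x => |f x| ^ p)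
    (hsymm : ∀ s ∈ S, s⁻¹ ∈ S) (hgen : Subgroup.closure (S : Set G) = ⊤)
    (hφ : ∀ y, 0 ≤ φ y) {s : ℝ} (hs : 0 < s) {J : ℕ} (hJ : s / 2 ^ J < 1) (y : G) :
    shiftEnergy p f y * φ y ≤
      2 ^ p * (∑' x, |f x| ^ p) * {x | s < (wordLength S x : ℝ)}.indicator φ y +
        ∑ k ∈ Finset.range J, (s / 2 ^ k) ^ p * (∑ z ∈ S, shiftEnergy p f z) *
          {x | s / 2 ^ (k + 1) < (wordLength S x : ℝ)}.indicator φ y := by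
  set T := ∑ z ∈ S, shiftEnergy p f z
  have hT : 0 ≤ T := Finset.sum_nonneg fun z _ => shiftEnergy_nonneg z
  have hind : ∀ A : Set G, 0 ≤ A.indicator φ y := fun A =>
    Set.indicator_nonneg (fun x _ => hφ x) y
  have hshells : 0 ≤ ∑ k ∈ Finset.range J, (s / 2 ^ k) ^ p * T *
      {x | s / 2 ^ (k + 1) < (wordLength S x : ℝ)}.indicator φ y :=
    Finset.sum_nonneg fun k _ => mul_nonneg (by positivity) (hind _)
  have hfar : 0 ≤ 2 ^ p * (∑' x, |f x| ^ p) * {x | s < (wordLength S x : ℝ)}.indicator φ y :=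
    mul_nonneg (mul_nonneg (by positivity) (tsum_nonneg fun x => by positivity)) (hind _)
  have hword := shiftEnergy_le_wordLength_rpow_mul S hp hf hsymm hgen y
  by_cases hsy : s < (wordLength S y : ℝ)
  · rw [Set.indicator_of_mem (show y ∈ {x | s < (wordLength S x : ℝ)} from hsy)]
    have := mul_le_mul_of_nonneg_right (shiftEnergy_le hp hf y) (hφ y)
    linarith
  rcases Nat.eq_zero_or_pos (wordLength S y) with h0 | hpos
  · rw [h0, Nat.cast_zero, Real.zero_rpow (by linarith), zero_mul] at hword
    have := mul_le_mul_of_nonneg_right hword (hφ y)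
    linarith
  · have h1 : (1 : ℝ) ≤ wordLength S y := by exact_mod_cast hpos
    -- Only the lower end of the shell containing `|y|` is kept, so each term is a tail mass.
    obtain ⟨k, hkJ, hk, hk'⟩ :=
      exists_dyadic_Ioc_mem (not_lt.mp hsy) J (hJ.trans_le h1)
    have hyk : shiftEnergy p f y * φ y ≤ (s / 2 ^ k) ^ p * T *
        {x | s / 2 ^ (k + 1) < (wordLength S x : ℝ)}.indicator φ y := by
      rw [Set.indicator_of_mem (show y ∈ {x | s / 2 ^ (k + 1) < (wordLength S x : ℝ)} from hk)]
      refine mul_le_mul_of_nonneg_right (hword.trans ?_) (hφ y)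
      gcongr
    have := Finset.single_le_sum (f := fun k => (s / 2 ^ k) ^ p * T *
        {x | s / 2 ^ (k + 1) < (wordLength S x : ℝ)}.indicator φ y)
      (fun k _ => mul_nonneg (by positivity) (hind _)) (Finset.mem_range.mpr hkJ)
    linarith

lemma tsum_shiftEnergy_mul_le (hp : 1 ≤ p) (hf : Summable fun x => |f x| ^ p)
    (hsymm : ∀ s ∈ S, s⁻¹ ∈ S) (hgen : Subgroup.closure (S : Set G) = ⊤)
    {ρ : ℝ → ℝ} (hρmono : MonotoneOn ρ (Set.Ici 0)) (hρpos : ∀ t ≥ 0, 0 < ρ t)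
    (hφ : ∀ y, 0 ≤ φ y) (hφs : Summable φ) {K : ℝ} (hK : 0 ≤ K)
    (hmom : ∀ t > (0 : ℝ), t * ∑' x, {x | t < ρ (wordLength S x : ℝ)}.indicator φ x ≤ K)
    {s : ℝ} (hs : 0 < s) :
    ∑' y, shiftEnergy p f y * φ y ≤
      2 ^ p * (∑' x, |f x| ^ p) * (K / ρ s) +
        4 ^ p * K * (∫ u in (0 : ℝ)..s, u ^ (p - 1) / ρ u) * ∑ z ∈ S, shiftEnergy p f z := by
  obtain ⟨J, hJ⟩ : ∃ J : ℕ, s / 2 ^ J < 1 := by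
    obtain ⟨J, hJ⟩ := pow_unbounded_of_one_lt s one_lt_two
    exact ⟨J, (div_lt_one (by positivity)).mpr hJ⟩
  set T := ∑ z ∈ S, shiftEnergy p f z
  set N := ∑' x, |f x| ^ p
  have hT : 0 ≤ T := Finset.sum_nonneg fun z _ => shiftEnergy_nonneg z
  have htail : ∀ a > 0, ∑' x, {x | a < (wordLength S x : ℝ)}.indicator φ x ≤ K / ρ a :=
    fun a ha => tsum_indicator_lt_le_div hφ hφs (fun x => Nat.cast_nonneg _) hρmono hmom
      ha.le (hρpos a ha.le)
  have hsumm : ∀ a : ℝ, Summable ({x | a < (wordLength S x : ℝ)}.indicator φ) :=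
    fun a => hφs.indicator _
  calc ∑' y, shiftEnergy p f y * φ y
      ≤ ∑' y, (2 ^ p * N * {x | s < (wordLength S x : ℝ)}.indicator φ y +
          ∑ k ∈ Finset.range J, (s / 2 ^ k) ^ p * T *
            {x | s / 2 ^ (k + 1) < (wordLength S x : ℝ)}.indicator φ y) :=
        (summable_shiftEnergy_mul hp hf hφ hφs).tsum_le_tsum
          (shiftEnergy_mul_le_dyadic_sum S hp hf hsymm hgen hφ hs hJ)
          (((hsumm s).mul_left _).add (summable_sum fun k _ => (hsumm _).mul_left _))
    _ = 2 ^ p * N * ∑' y, {x | s < (wordLength S x : ℝ)}.indicator φ y +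
          ∑ k ∈ Finset.range J, (s / 2 ^ k) ^ p * T *
            ∑' y, {x | s / 2 ^ (k + 1) < (wordLength S x : ℝ)}.indicator φ y := by
        rw [Summable.tsum_add ((hsumm s).mul_left _)
            (summable_sum fun k _ => (hsumm _).mul_left _),
          Summable.tsum_finsetSum fun k _ => (hsumm _).mul_left _, tsum_mul_left]
        simp only [tsum_mul_left]
    _ ≤ 2 ^ p * N * (K / ρ s) +
          ∑ k ∈ Finset.range J, (s / 2 ^ k) ^ p * T * (K / ρ (s / 2 ^ (k + 1))) := by
        gcongr with k
        · exact htail s hs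
        · exact htail _ (by positivity)
    _ = 2 ^ p * N * (K / ρ s) +
          K * T * ∑ k ∈ Finset.range J, (s / 2 ^ k) ^ p / ρ (s / 2 ^ (k + 1)) := by
        rw [Finset.mul_sum]
        congr 1
        exact Finset.sum_congr rfl fun k _ => by ring
    _ ≤ 2 ^ p * N * (K / ρ s) +
          4 ^ p * K * (∫ u in (0 : ℝ)..s, u ^ (p - 1) / ρ u) * T := by
        have := mul_le_mul_of_nonneg_left (sum_dyadic_le_integral hp hρmono hρpos hs J)
          (mul_nonneg hK hT)
        linarith

end WeakMoment

section Profile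

variable {G : Type*} [Group G] {p : ℝ}

noncomputable def energyP (p : ℝ) (μ f : G → ℝ) : ℝ :=
  1 / 2 * ∑' x, ∑' y, |f (x * y) - f x| ^ p * μ y

lemma energyP_nonneg {μ : G → ℝ} (hμ : ∀ y, 0 ≤ μ y) (f : G → ℝ) : 0 ≤ energyP p μ f :=
  mul_nonneg (by norm_num) (tsum_nonneg fun x => tsum_nonneg fun y =>
    mul_nonneg (Real.rpow_nonneg (abs_nonneg _) _) (hμ y))

lemma energyP_eq_half_tsum_shiftEnergy_mul (hp : 1 ≤ p) {f : G → ℝ}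
    (hf : Summable fun x => |f x| ^ p) {μ : G → ℝ} (hμ : ∀ y, 0 ≤ μ y) (hμs : Summable μ) :
    energyP p μ f = 1 / 2 * ∑' y, shiftEnergy p f y * μ y := by
  have hF : 0 ≤ fun z : G × G => |f (z.2 * z.1) - f z.2| ^ p * μ z.1 := fun z =>
    mul_nonneg (Real.rpow_nonneg (abs_nonneg _) _) (hμ z.1)
  have hrow : ∀ y, Summable fun x => |f (x * y) - f x| ^ p * μ y := fun y =>
    (summable_shiftEnergy hp hf y).mul_right _
  have hcol : Summable fun y => ∑' x, |f (x * y) - f x| ^ p * μ y := by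
    simp only [tsum_mul_right]
    exact summable_shiftEnergy_mul hp hf hμ hμs
  have h := (summable_prod_of_nonneg hF).mpr ⟨hrow, hcol⟩
  rw [energyP, Summable.tsum_comm (f := fun y x => |f (x * y) - f x| ^ p * μ y) h]
  simp only [tsum_mul_right, shiftEnergy]

lemma unifS_nonneg [DecidableEq G] (S : Finset G) (y : G) : 0 ≤ unifS S y := by
  unfold unifS
  split_ifs <;> positivity

lemma summable_unifS [DecidableEq G] (S : Finset G) : Summable (unifS S) :=
  summable_of_ne_finset_zero (s := S) fun y hy => by simp [unifS, hy]

lemma two_mul_card_mul_energyP_unifS [DecidableEq G] (hp : 1 ≤ p) {f : G → ℝ}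
    (hf : Summable fun x => |f x| ^ p) (S : Finset G) :
    2 * S.card * energyP p (unifS S) f = ∑ z ∈ S, shiftEnergy p f z := by
  rw [energyP_eq_half_tsum_shiftEnergy_mul hp hf (unifS_nonneg S) (summable_unifS S),
    tsum_eq_sum (s := S) fun y hy => by simp [unifS, hy],
    Finset.sum_congr rfl fun y hy => by rw [unifS, if_pos hy], ← Finset.sum_mul]
  rcases S.eq_empty_or_nonempty with rfl | hS
  · simp
  · have : (S.card : ℝ) ≠ 0 := by exact_mod_cast hS.card_pos.ne'
    field_simp

lemma lambdaP_le_add_mul_lambdaP {μ ν : G → ℝ} (hμ : ∀ y, 0 ≤ μ y) (hν : ∀ y, 0 ≤ ν y)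
    {a b : ℝ} (ha : 0 ≤ a) (hb : 0 ≤ b) (v : ℝ)
    (h : ∀ f : G → ℝ, ∑' x, |f x| ^ p = 1 → energyP p μ f ≤ a + b * energyP p ν f) :
    lambdaP p μ v ≤ a + b * lambdaP p ν v := by
  set A := {f : G → ℝ | (Function.support f).Finite ∧
    ((Function.support f).ncard : ℝ) ≤ v ∧ ∑' x, |f x| ^ p = 1}
  have hΛ : ∀ μ : G → ℝ, lambdaP p μ v = sInf (energyP p μ '' A) := fun μ => by
    simp only [lambdaP, energyP, Set.image, A, Set.mem_ofPred_eq, and_assoc, eq_comm]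
  have hbdd : ∀ μ : G → ℝ, (∀ y, 0 ≤ μ y) → BddBelow (energyP p μ '' A) :=
    fun μ hμ => ⟨0, by rintro _ ⟨f, -, rfl⟩; exact energyP_nonneg hμ f⟩
  rw [hΛ, hΛ]
  rcases A.eq_empty_or_nonempty with hA | hA
  · simpa [hA] using ha
  rw [Monotone.map_csInf_of_continuousAt (f := fun x => a + b * x) (by fun_prop)
    (fun x y hxy => by dsimp only; gcongr) (hA.image _) (hbdd ν hν)]
  refine le_csInf ((hA.image _).image _) ?_
  rintro _ ⟨_, ⟨f, hf, rfl⟩, rfl⟩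
  exact (csInf_le (hbdd μ hμ) ⟨f, hf, rfl⟩).trans (h f hf.2.2)

end Profile

lemma energyP_le_of_weak_moment {G : Type*} [Group G] [DecidableEq G] (S : Finset G)
    (hsymm : ∀ s ∈ S, s⁻¹ ∈ S) (hgen : Subgroup.closure (S : Set G) = ⊤)
    {p : ℝ} (hp : 1 ≤ p) {ρ : ℝ → ℝ} (hρmono : MonotoneOn ρ (Set.Ici 0))
    (hρpos : ∀ t ≥ 0, 0 < ρ t) {φ : G → ℝ} (hφ : ∀ y, 0 ≤ φ y) (hφs : Summable φ)
    {K : ℝ} (hK : 0 ≤ K)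
    (hmom : ∀ t > (0 : ℝ), t * ∑' x, {x | t < ρ (wordLength S x : ℝ)}.indicator φ x ≤ K)
    {s : ℝ} (hs : 0 < s) {f : G → ℝ} (hf : ∑' x, |f x| ^ p = 1) :
    energyP p φ f ≤ 4 ^ p * K / ρ s +
      4 ^ p * K * S.card * (∫ u in (0 : ℝ)..s, u ^ (p - 1) / ρ u) * energyP p (unifS S) f := by
  have hfs : Summable fun x => |f x| ^ p := summable_of_tsum_eq_one hf
  have h := tsum_shiftEnergy_mul_le S hp hfs hsymm hgen hρmono hρpos hφ hφs hK hmom hs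
  rw [hf, ← two_mul_card_mul_energyP_unifS hp hfs S] at h
  have h24 : (2 : ℝ) ^ p ≤ 4 ^ p := Real.rpow_le_rpow (by norm_num) (by norm_num) (by linarith)
  have hKρ : 0 ≤ K / ρ s := div_nonneg hK (hρpos s hs.le).le
  rw [energyP_eq_half_tsum_shiftEnergy_mul hp hfs hφ hφs, mul_div_assoc]
  have h4 : 0 ≤ 4 ^ p * (K / ρ s) := by positivity
  linarith [mul_le_mul_of_nonneg_right h24 hKρ]

theorem profile_comparison_weak_moment_general
    (p : ℝ) (hp : 1 ≤ p) (ρ : ℝ → ℝ) (hρmono : MonotoneOn ρ (Set.Ici 0))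
    (hρ1 : ∀ t ≥ (0:ℝ), 1 ≤ ρ t) :
    ∃ C > (0:ℝ), ∀ (G : Type) [Group G] [DecidableEq G] (S : Finset G),
      (1 : G) ∈ S → (∀ s ∈ S, s⁻¹ ∈ S) → Subgroup.closure (S : Set G) = ⊤ →
      ∀ (φ : G → ℝ), IsSymProb φ → ∀ K > (0:ℝ),
      (∀ t > (0:ℝ),
        t * ∑' x : G, ({x : G | t < ρ ((wordLength S x : ℝ))}).indicator φ x ≤ K) →
      ∀ v > (0:ℝ), ∀ s > (0:ℝ),
      lambdaP p φ v ≤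
        C * K * (1 / ρ s +
          (S.card : ℝ) * s ^ p / (s ^ p / ∫ u in (0:ℝ)..s, u ^ (p - 1) / ρ u) *
            lambdaP p (unifS S) v) := by
  refine ⟨4 ^ p, by positivity, ?_⟩
  rintro G _ _ S - hsymm hgen φ ⟨hφ, hφ1, -⟩ K hK hmom v - s hs
  have hρpos : ∀ t ≥ 0, 0 < ρ t := fun t ht => one_pos.trans_le (hρ1 t ht)
  have hφs : Summable φ := summable_of_tsum_eq_one hφ1
  set I := ∫ u in (0 : ℝ)..s, u ^ (p - 1) / ρ u
  have hI : 0 ≤ I := intervalIntegral.integral_nonneg hs.le fun u hu =>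
    div_nonneg (Real.rpow_nonneg hu.1 _) (hρpos u hu.1).le
  have hcoef : (S.card : ℝ) * s ^ p / (s ^ p / I) = S.card * I := by
    field_simp [(Real.rpow_pos_of_pos hs p).ne']
  calc lambdaP p φ v
      ≤ 4 ^ p * K / ρ s + 4 ^ p * K * S.card * I * lambdaP p (unifS S) v :=
        lambdaP_le_add_mul_lambdaP hφ (unifS_nonneg S)
          (div_nonneg (by positivity) (hρpos s hs.le).le) (by positivity) v fun f hf =>
            energyP_le_of_weak_moment S hsymm hgen hp hρmono hρpos hφ hφs hK.le hmom hs hf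
    _ = _ := by rw [hcoef]; ring

/-- Comparison of isoperimetric profiles under a weak moment condition:
there is `C = C(p,ρ) > 0` such that for every group, generating set, `φ` with
`W(ρ,φ) ≤ K`, all `v > 0` and `s > 0`,
`Λ_{p,φ}(v) ≤ C·K·(1/ρ(s) + |S|·s^p/M_{p,ρ}(s) · Λ_{p,u}(v))`,
where `M_{p,ρ}(s) = s^p / ∫₀^s u^{p−1}/ρ(u) du`. -/
theorem profile_comparison_weak_moment
    (p : ℝ) (hp : 1 ≤ p) (ρ : ℝ → ℝ) (hρmono : MonotoneOn ρ (Set.Ici 0))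
    (hρcont : ContinuousOn ρ (Set.Ici 0)) (hρ1 : ∀ t ≥ (0:ℝ), 1 ≤ ρ t) :
    ∃ C > (0:ℝ), ∀ (G : Type) [Group G] [DecidableEq G] (S : Finset G),
      (1 : G) ∈ S → (∀ s ∈ S, s⁻¹ ∈ S) → Subgroup.closure (S : Set G) = ⊤ →
      ∀ (φ : G → ℝ), IsSymProb φ → ∀ K > (0:ℝ),
      (∀ t > (0:ℝ),
        t * ∑' x : G, ({x : G | t < ρ ((wordLength S x : ℝ))}).indicator φ x ≤ K) →
      ∀ v > (0:ℝ), ∀ s > (0:ℝ),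
      lambdaP p φ v ≤
        C * K * (1 / ρ s +
          (S.card : ℝ) * s ^ p / (s ^ p / ∫ u in (0:ℝ)..s, u ^ (p - 1) / ρ u) *
            lambdaP p (unifS S) v) :=
  profile_comparison_weak_moment_general p hp ρ hρmono hρ1
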